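/- arXiv:2510.14894 — 4 statements merged into one kernel-verified Lean document; each statement's English description precedes it below -/
import Mathlib

section
/- Let ε > 0, let L be a positive integer, and let δ > 0 satisfy 2δ ≤ L·(L+1). Let η_1, …, η_L be random variables on a common probability space, each distributed according to the Laplace density with scale (L+1)/ε. Then P(∑_{j=1}^L η_j ≤ −(L·(L+1)/ε)·log(L·(L+1)/(2δ))) ≤ δ. Equivalently, with probability at least 1 − δ, adding the offset (L·(L+1)/ε)·log(L·(L+1)/(2δ)) plus the noise ∑_j η_j to any real number y yields a value at least y. -/
/-!
Put `b = (L + 1) / ε`, `R = L (L + 1) / (2 δ) ≥ 1` and `c = b log R ≥ 0`, so that the threshold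
is `L · (-c)`. If the sum of the `L` noises is at most `L · (-c)`, some `η j` is at most `-c`,
and the Laplace tail gives `P (η j ≤ -c) = exp (-c / b) / 2 = δ / (L (L + 1))`. The union bound
then bounds the probability by `δ / (L + 1) ≤ δ`.
-/

open MeasureTheory Real Set

noncomputable def laplaceMeasure (b : ℝ) : Measure ℝ :=
  volume.withDensity fun t => ENNReal.ofReal ((1 / (2 * b)) * exp (-|t| / b))

lemma laplaceMeasure_Iic_of_nonpos {b : ℝ} (hb : 0 < b) {x : ℝ} (hx : x ≤ 0) :
    laplaceMeasure b (Iic x) = ENNReal.ofReal (exp (x / b) / 2) := by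
  have hb' : 0 < b⁻¹ := inv_pos.2 hb
  have hdensity : ∀ t ∈ Iic x, (1 / (2 * b)) * exp (-|t| / b) = b⁻¹ / 2 * exp (b⁻¹ * t) := by
    intro t ht
    rw [abs_of_nonpos (ht.trans hx), neg_neg, div_eq_inv_mul t]
    ring
  rw [laplaceMeasure, withDensity_apply _ measurableSet_Iic,
    setLIntegral_congr_fun measurableSet_Iic fun t ht => by rw [hdensity t ht],
    ← ofReal_integral_eq_lintegral_ofReal ((integrableOn_exp_mul_Iic hb' x).const_mul _)
      (ae_of_all _ fun t => by positivity),
    integral_const_mul, integral_exp_mul_Iic hb']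
  congr 1
  field_simp

lemma measure_le_of_map_eq_laplaceMeasure {Ω : Type*} [MeasurableSpace Ω] {P : Measure Ω}
    {X : Ω → ℝ} (hX : Measurable X) {b : ℝ} (hb : 0 < b) (hlaw : P.map X = laplaceMeasure b)
    {x : ℝ} (hx : x ≤ 0) :
    P {ω | X ω ≤ x} = ENNReal.ofReal (exp (x / b) / 2) := by
  rw [← laplaceMeasure_Iic_of_nonpos hb hx, ← hlaw, Measure.map_apply hX measurableSet_Iic]
  rfl

lemma measure_sum_le_card_mul_le_sum_measure {Ω ι : Type*} [MeasurableSpace Ω] [Fintype ι]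
    [Nonempty ι] (μ : Measure Ω) (f : ι → Ω → ℝ) (a : ℝ) :
    μ {ω | ∑ j, f j ω ≤ Fintype.card ι * a} ≤ ∑ j, μ {ω | f j ω ≤ a} := by
  refine (measure_mono fun ω hω => ?_).trans (measure_iUnion_fintype_le μ _)
  obtain ⟨j, -, hj⟩ := Finset.exists_le_of_sum_le (g := fun _ => a) Finset.univ_nonempty
    (by simpa using hω)
  exact mem_iUnion.2 ⟨j, hj⟩

theorem laplace_sum_high_prob_upper_bound_general {Ω : Type*} [MeasurableSpace Ω]
    (P : MeasureTheory.Measure Ω)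
    (ε δ : ℝ) (L : ℕ) (hε : 0 < ε) (hδ : 0 < δ)
    (hδL : 2 * δ ≤ (L : ℝ) * ((L : ℝ) + 1))
    (η : Fin L → Ω → ℝ) (hmeas : ∀ j, Measurable (η j))
    (hlaw : ∀ j, P.map (η j) =
      MeasureTheory.volume.withDensity
        (fun t : ℝ => ENNReal.ofReal
          ((1 / (2 * (((L : ℝ) + 1) / ε))) * Real.exp (-|t| / (((L : ℝ) + 1) / ε))))) :
    P {ω | ∑ j, η j ω ≤
        -((L : ℝ) * ((L : ℝ) + 1) / ε) * Real.log ((L : ℝ) * ((L : ℝ) + 1) / (2 * δ))}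
      ≤ ENNReal.ofReal δ := by
  have hLL : 0 < (L : ℝ) * (L + 1) := by linarith
  have hL : 0 < L := Nat.pos_of_ne_zero (by rintro rfl; simp at hLL)
  have : Nonempty (Fin L) := ⟨⟨0, hL⟩⟩
  set b : ℝ := (L + 1) / ε
  set R : ℝ := L * (L + 1) / (2 * δ)
  have hR : 1 ≤ R := (one_le_div (by positivity)).2 hδL
  set c : ℝ := b * log R
  have hb : 0 < b := by positivity
  have hc : 0 ≤ c := mul_nonneg hb.le (log_nonneg hR)
  have htail : ∀ j, P {ω | η j ω ≤ -c} = ENNReal.ofReal (δ / (L * (L + 1))) := by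
    intro j
    rw [measure_le_of_map_eq_laplaceMeasure (hmeas j) hb (hlaw j) (neg_nonpos.2 hc), neg_div,
      mul_div_cancel_left₀ _ hb.ne', exp_neg, exp_log (by positivity)]
    congr 1
    simp only [R]
    field_simp
  have hthreshold : -(L * (L + 1) / ε) * log R = Fintype.card (Fin L) * -c := by
    simp only [c, b, Fintype.card_fin]
    ring
  calc P {ω | ∑ j, η j ω ≤ -(L * (L + 1) / ε) * log R}
      = P {ω | ∑ j, η j ω ≤ Fintype.card (Fin L) * -c} := by rw [hthreshold]
    _ ≤ ∑ j, P {ω | η j ω ≤ -c} := measure_sum_le_card_mul_le_sum_measure P η (-c)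
    _ = ENNReal.ofReal (L * (δ / (L * (L + 1)))) := by
        simp [htail, ENNReal.ofReal_mul]
    _ ≤ ENNReal.ofReal δ := by
        refine ENNReal.ofReal_le_ofReal ?_
        rw [mul_div_assoc', mul_div_mul_left _ _ (by positivity), div_le_iff₀ (by positivity)]
        nlinarith

theorem laplace_sum_high_prob_upper_bound {Ω : Type*} [MeasurableSpace Ω]
    (P : MeasureTheory.Measure Ω) [MeasureTheory.IsProbabilityMeasure P]
    (ε δ : ℝ) (L : ℕ) (hL : 0 < L) (hε : 0 < ε) (hδ : 0 < δ)
    (hδL : 2 * δ ≤ (L : ℝ) * ((L : ℝ) + 1))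
    (η : Fin L → Ω → ℝ) (hmeas : ∀ j, Measurable (η j))
    (hlaw : ∀ j, P.map (η j) =
      MeasureTheory.volume.withDensity
        (fun t : ℝ => ENNReal.ofReal
          ((1 / (2 * (((L : ℝ) + 1) / ε))) * Real.exp (-|t| / (((L : ℝ) + 1) / ε))))) :
    P {ω | ∑ j, η j ω ≤
        -((L : ℝ) * ((L : ℝ) + 1) / ε) * Real.log ((L : ℝ) * ((L : ℝ) + 1) / (2 * δ))}
      ≤ ENNReal.ofReal δ :=
  laplace_sum_high_prob_upper_bound_general P ε δ L hε hδ hδL η hmeas hlaw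
end

section
/- Let R be a commutative ring, and let a : Fin η_a → ℕ × R and b : Fin η_b → ℕ × R be tuple lists whose coordinate maps are each injective, representing vectors x and y (x i equals the value paired with coordinate i in a, or 0 if i does not appear; similarly for y). Let z : List (ℕ × R) be any permutation of the concatenation of the tuples of a and b such that z.map Prod.fst is sorted in nondecreasing order, and let N = η_a + η_b be its length. Then ∑_{k=0}^{N−2} (if (z.get k).1 = (z.get (k+1)).1 then (z.get k).2 · (z.get (k+1)).2 else 0) = ∑_i x i · y i, where the right-hand sum ranges over any finite set of indices containing all coordinates appearing in a and b. -/
/-!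
Let `pairSum z` be the sum of `[p.1 = q.1] * p.2 * q.2` over all pairs of entries `p` before `q`
of `z`. It does not depend on the order of `z`. If `z` is sorted by coordinate and no
coordinate occurs more than twice, equal coordinates sit next to each other, so `pairSum z`
is exactly the algorithm's sum over consecutive tuples. If instead `z` is the concatenation of
the two tuple lists, pairs inside one list never match, and the cross pairs add up to the
inner product.
-/

theorem List.sum_range_getD_eq_sum_zipWith_tail {α M : Type*} [AddCommMonoid M]
    (f : α → α → M) (d : α) (l : List α) :
    ∑ k ∈ Finset.range (l.length - 1), f (l.getD k d) (l.getD (k + 1) d) =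
      (List.zipWith f l l.tail).sum := by
  induction l with
  | nil => rfl
  | cons p l ih =>
    cases l with
    | nil => rfl
    | cons q l =>
      simp only [List.length_cons, Nat.add_sub_cancel, List.getD_cons_succ, List.tail_cons] at ih
      rw [List.length_cons, List.length_cons, Nat.add_sub_cancel, Finset.sum_range_succ',
        List.tail_cons, List.zipWith_cons_cons, List.sum_cons, add_comm]
      simp only [List.getD_cons_succ, List.getD_cons_zero, ih]

theorem List.count_le_two_of_perm_append {α : Type*} [BEq α] [LawfulBEq α]
    {l l₁ l₂ : List α} (h : l.Perm (l₁ ++ l₂)) (h₁ : l₁.Nodup) (h₂ : l₂.Nodup) (a : α) :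
    l.count a ≤ 2 := by
  have c₁ := List.nodup_iff_count_le_one.mp h₁ a
  have c₂ := List.nodup_iff_count_le_one.mp h₂ a
  rw [h.count_eq, List.count_append]
  omega

theorem List.notMem_of_pairwise_le_of_count_le_two {α : Type*} [PartialOrder α] [DecidableEq α]
    {a b : α} {l : List α} (hs : (a :: b :: l).Pairwise (· ≤ ·))
    (hc : (a :: b :: l).count a ≤ 2) : a ∉ l := by
  intro ha
  simp only [List.pairwise_cons, List.mem_cons, forall_eq_or_imp] at hs
  have hba : b = a := le_antisymm (hs.2.1 a ha) hs.1.1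
  have hl : 0 < l.count a := List.count_pos_iff.mpr ha
  simp only [List.count_cons, hba, beq_self_eq_true, if_true] at hc
  omega

theorem List.nodup_map_ofFn {α β : Type*} {n : ℕ} {a : Fin n → α} {f : α → β}
    (h : Function.Injective (f ∘ a)) : ((List.ofFn a).map f).Nodup := by
  rw [List.map_ofFn]
  exact List.nodup_ofFn.mpr h

namespace SparseVector

variable {ι R : Type*} [DecidableEq ι] [CommSemiring R]

def matchProd (p q : ι × R) : R := if p.1 = q.1 then p.2 * q.2 else 0

theorem matchProd_comm (p q : ι × R) : matchProd p q = matchProd q p := by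
  by_cases h : p.1 = q.1
  · simp [matchProd, h, mul_comm]
  · simp [matchProd, h, Ne.symm h]

theorem sum_map_matchProd_eq_zero {p : ι × R} {l : List (ι × R)} (h : p.1 ∉ l.map Prod.fst) :
    (l.map (matchProd p)).sum = 0 :=
  List.sum_eq_zero fun r hr => by
    obtain ⟨q, hq, rfl⟩ := List.mem_map.mp hr
    have hne : p.1 ≠ q.1 := fun he => h (he ▸ List.mem_map_of_mem hq)
    simp [matchProd, hne]

def pairSum : List (ι × R) → R
  | [] => 0
  | p :: l => (l.map (matchProd p)).sum + pairSum l

def adjSum (l : List (ι × R)) : R := (List.zipWith matchProd l l.tail).sum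

theorem pairSum_perm {l₁ l₂ : List (ι × R)} (h : l₁.Perm l₂) : pairSum l₁ = pairSum l₂ := by
  induction h with
  | nil => rfl
  | cons p h ih => simp only [pairSum, ih, (h.map (matchProd p)).sum_eq]
  | swap p q l =>
    simp only [pairSum, List.map_cons, List.sum_cons, matchProd_comm q p]
    ring
  | trans _ _ ih₁ ih₂ => rw [ih₁, ih₂]

theorem pairSum_append (l₁ l₂ : List (ι × R)) :
    pairSum (l₁ ++ l₂) =
      pairSum l₁ + pairSum l₂ + (l₁.map fun p => (l₂.map (matchProd p)).sum).sum := by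
  induction l₁ with
  | nil => simp [pairSum]
  | cons p l ih =>
    simp only [List.cons_append, pairSum, List.map_append, List.sum_append, ih, List.map_cons,
      List.sum_cons]
    ring

theorem pairSum_eq_zero_of_nodup {l : List (ι × R)} (h : (l.map Prod.fst).Nodup) :
    pairSum l = 0 := by
  induction l with
  | nil => rfl
  | cons p l ih =>
    rw [List.map_cons, List.nodup_cons] at h
    simp [pairSum, sum_map_matchProd_eq_zero h.1, ih h.2]

theorem pairSum_append_of_nodup {l₁ l₂ : List (ι × R)} (h₁ : (l₁.map Prod.fst).Nodup)
    (h₂ : (l₂.map Prod.fst).Nodup) :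
    pairSum (l₁ ++ l₂) = (l₁.map fun p => (l₂.map (matchProd p)).sum).sum := by
  rw [pairSum_append, pairSum_eq_zero_of_nodup h₁, pairSum_eq_zero_of_nodup h₂, zero_add,
    zero_add]

theorem pairSum_eq_adjSum [PartialOrder ι] {l : List (ι × R)}
    (hs : (l.map Prod.fst).Pairwise (· ≤ ·)) (hc : ∀ i, (l.map Prod.fst).count i ≤ 2) :
    pairSum l = adjSum l := by
  induction l with
  | nil => rfl
  | cons p l ih =>
    have ih' : pairSum l = adjSum l := by
      refine ih (List.pairwise_cons.mp (by simpa using hs)).2 fun i => ?_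
      have := hc i
      simp only [List.map_cons, List.count_cons] at this
      omega
    cases l with
    | nil => simp [pairSum, adjSum]
    | cons q l =>
      have hp := List.notMem_of_pairwise_le_of_count_le_two hs (hc p.1)
      rw [pairSum, List.map_cons, List.sum_cons, sum_map_matchProd_eq_zero hp, add_zero, ih']
      simp [adjSum]

section Vector

variable {κ κ' : Type*} [Fintype κ] [Fintype κ']

def toFun (a : κ → ι × R) (i : ι) : R := ∑ j with (a j).1 = i, (a j).2

theorem sum_matchProd_eq_mul_toFun (p : ι × R) (b : κ → ι × R) :
    ∑ k, matchProd p (b k) = p.2 * toFun b p.1 := by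
  rw [toFun, Finset.mul_sum, Finset.sum_filter]
  refine Finset.sum_congr rfl fun k _ => ?_
  by_cases h : (b k).1 = p.1
  · simp [matchProd, h]
  · simp [matchProd, h, Ne.symm h]

theorem sum_toFun_mul_eq {a : κ → ι × R} (y : ι → R) {I : Finset ι} (hI : ∀ j, (a j).1 ∈ I) :
    ∑ i ∈ I, toFun a i * y i = ∑ j, (a j).2 * y (a j).1 := by
  simp_rw [toFun, Finset.sum_mul]
  rw [← Finset.sum_fiberwise_of_maps_to (fun j _ => hI j)]
  refine Finset.sum_congr rfl fun i _ => Finset.sum_congr rfl fun j hj => ?_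
  rw [(Finset.mem_filter.mp hj).2]

theorem sum_toFun_mul_toFun_eq_sum_matchProd {a : κ → ι × R} (b : κ' → ι × R) {I : Finset ι}
    (hI : ∀ j, (a j).1 ∈ I) :
    ∑ i ∈ I, toFun a i * toFun b i = ∑ j, ∑ k, matchProd (a j) (b k) := by
  simp_rw [sum_toFun_mul_eq _ hI, sum_matchProd_eq_mul_toFun]

end Vector

end SparseVector

open SparseVector in
theorem sparse_vector_mult_algorithm_correct_general {R : Type*} [CommRing R]
    {ηa ηb : ℕ} (a : Fin ηa → ℕ × R) (b : Fin ηb → ℕ × R)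
    (ha : Function.Injective (fun j => (a j).1))
    (hb : Function.Injective (fun k => (b k).1))
    (x y : ℕ → R)
    (hx : ∀ i, x i = ∑ j ∈ Finset.univ.filter (fun j => (a j).1 = i), (a j).2)
    (hy : ∀ i, y i = ∑ k ∈ Finset.univ.filter (fun k => (b k).1 = i), (b k).2)
    (z : List (ℕ × R)) (hperm : z.Perm (List.ofFn a ++ List.ofFn b))
    (hsorted : (z.map Prod.fst).Pairwise (· ≤ ·))
    (I : Finset ℕ) (hIa : ∀ j, (a j).1 ∈ I) :
    ∑ k ∈ Finset.range (ηa + ηb - 1),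
        (if (z.getD k (0, 0)).1 = (z.getD (k + 1) (0, 0)).1
         then (z.getD k (0, 0)).2 * (z.getD (k + 1) (0, 0)).2 else 0)
      = ∑ i ∈ I, x i * y i := by
  obtain rfl : x = toFun a := funext hx
  obtain rfl : y = toFun b := funext hy
  have hna : ((List.ofFn a).map Prod.fst).Nodup := List.nodup_map_ofFn ha
  have hnb : ((List.ofFn b).map Prod.fst).Nodup := List.nodup_map_ofFn hb
  have hcount := List.count_le_two_of_perm_append
    (by simpa only [List.map_append] using hperm.map Prod.fst) hna hnb
  have hlen : z.length = ηa + ηb := by simp [hperm.length_eq]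
  calc _ = adjSum z := by
        rw [adjSum, ← List.sum_range_getD_eq_sum_zipWith_tail _ (0, 0), hlen]
        rfl
    _ = pairSum z := (pairSum_eq_adjSum hsorted hcount).symm
    _ = pairSum (List.ofFn a ++ List.ofFn b) := pairSum_perm hperm
    _ = ∑ j, ∑ k, matchProd (a j) (b k) := by
        simp only [pairSum_append_of_nodup hna hnb, List.map_ofFn, List.sum_ofFn, Function.comp_def]
    _ = _ := (sum_toFun_mul_toFun_eq_sum_matchProd b hIa).symm

theorem sparse_vector_mult_algorithm_correct {R : Type*} [CommRing R]
    {ηa ηb : ℕ} (a : Fin ηa → ℕ × R) (b : Fin ηb → ℕ × R)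
    (ha : Function.Injective (fun j => (a j).1))
    (hb : Function.Injective (fun k => (b k).1))
    (x y : ℕ → R)
    (hx : ∀ i, x i = ∑ j ∈ Finset.univ.filter (fun j => (a j).1 = i), (a j).2)
    (hy : ∀ i, y i = ∑ k ∈ Finset.univ.filter (fun k => (b k).1 = i), (b k).2)
    (z : List (ℕ × R)) (hperm : z.Perm (List.ofFn a ++ List.ofFn b))
    (hsorted : (z.map Prod.fst).Pairwise (· ≤ ·))
    (I : Finset ℕ) (hIa : ∀ j, (a j).1 ∈ I) (hIb : ∀ k, (b k).1 ∈ I) :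
    ∑ k ∈ Finset.range (ηa + ηb - 1),
        (if (z.getD k (0, 0)).1 = (z.getD (k + 1) (0, 0)).1
         then (z.getD k (0, 0)).2 * (z.getD (k + 1) (0, 0)).2 else 0)
      = ∑ i ∈ I, x i * y i :=
  sparse_vector_mult_algorithm_correct_general a b ha hb x y hx hy z hperm hsorted I hIa
end

section
/- Let R be a commutative ring, n, m positive integers, X : Matrix (Fin n) (Fin m) R, and y : Fin m → R. Let S be a finite set of triples ((i, j), v) ∈ (Fin n × Fin m) × R whose coordinate pairs (i, j) are pairwise distinct, with X i j = v for every ((i, j), v) ∈ S and X i j = 0 whenever (i, j) is not a coordinate of any element of S. Let T be a finite set of pairs (j, w) ∈ Fin m × R whose coordinates j are pairwise distinct, with y j = w for every (j, w) ∈ T and y j = 0 whenever j is not a coordinate of any element of T. Then for every i ∈ Fin n, (X.mulVec y) i = ∑_{((i', j), v) ∈ S} ∑_{(j', w) ∈ T} (if i' = i ∧ j = j' then v · w else 0). -/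
theorem sparse_mat_vec_mult_correct {R : Type*} [CommRing R] {n m : ℕ}
    (hn : 0 < n) (hm : 0 < m)
    (X : Matrix (Fin n) (Fin m) R) (y : Fin m → R)
    (S : Finset ((Fin n × Fin m) × R))
    (hSinj : ∀ s ∈ S, ∀ s' ∈ S, s.1 = s'.1 → s = s')
    (hSX : ∀ s ∈ S, X s.1.1 s.1.2 = s.2)
    (hSX0 : ∀ i j, (∀ s ∈ S, s.1 ≠ (i, j)) → X i j = 0)
    (T : Finset (Fin m × R))
    (hTinj : ∀ t ∈ T, ∀ t' ∈ T, t.1 = t'.1 → t = t')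
    (hTy : ∀ t ∈ T, y t.1 = t.2)
    (hTy0 : ∀ j, (∀ t ∈ T, t.1 ≠ j) → y j = 0) :
    ∀ i : Fin n, X.mulVec y i =
      ∑ s ∈ S, ∑ t ∈ T, (if s.1.1 = i ∧ s.1.2 = t.1 then s.2 * t.2 else 0) := by
  intro i
  have hy : ∀ j : Fin m, y j = ∑ t ∈ T, (if t.1 = j then t.2 else 0) := by
    intro j
    by_cases h : ∃ t ∈ T, t.1 = j
    · obtain ⟨t₀, ht₀, ht₀j⟩ := h
      rw [Finset.sum_eq_single_of_mem t₀ ht₀]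
      · simp [ht₀j, ← hTy t₀ ht₀, ht₀j]
      · intro t ht hne
        have : t.1 ≠ j := fun hj => hne (hTinj t ht t₀ ht₀ (by rw [hj, ht₀j]))
        simp [this]
    · push_neg at h
      rw [hTy0 j h]
      exact (Finset.sum_eq_zero fun t ht => by simp [h t ht]).symm
  have hX : ∀ j : Fin m, X i j = ∑ s ∈ S, (if s.1 = (i, j) then s.2 else 0) := by
    intro j
    by_cases h : ∃ s ∈ S, s.1 = (i, j)
    · obtain ⟨s₀, hs₀, hs₀j⟩ := h
      rw [Finset.sum_eq_single_of_mem s₀ hs₀]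
      · have := hSX s₀ hs₀
        rw [hs₀j] at this
        simp [hs₀j, ← this]
      · intro s hs hne
        have : s.1 ≠ (i, j) := fun hj => hne (hSinj s hs s₀ hs₀ (by rw [hj, hs₀j]))
        simp [this]
    · push_neg at h
      rw [hSX0 i j h]
      exact (Finset.sum_eq_zero fun s hs => by simp [h s hs]).symm
  have : X.mulVec y i = ∑ j, X i j * y j := rfl
  rw [this]
  have step : ∑ j, X i j * y j =
      ∑ j, ∑ s ∈ S, ∑ t ∈ T, (if s.1 = (i, j) then s.2 else 0) * (if t.1 = j then t.2 else 0) :=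
    Finset.sum_congr rfl fun j _ => by rw [hX j, hy j, Finset.sum_mul_sum]
  rw [step]
  rw [Finset.sum_comm]
  refine Finset.sum_congr rfl fun s _ => ?_
  rw [Finset.sum_comm]
  refine Finset.sum_congr rfl fun t _ => ?_
  rw [Finset.sum_eq_single t.1 (fun x _ hx => by simp [Ne.symm hx]) (by simp)]
  by_cases h : s.1 = (i, t.1)
  · simp [h, Prod.ext_iff]
  · have h2 : ¬(s.1.1 = i ∧ s.1.2 = t.1) := by
      rintro ⟨h1, h2⟩; exact h (Prod.ext h1 h2)
    simp [h, h2]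
end

section
/- Let n and K be positive integers, let d : Fin n → ℕ be the numbers of non-zeros of the n rows of a sparse matrix, let n_1, …, n_K be natural numbers with n_1 + ⋯ + n_K = n, and let N_1 ≤ N_2 ≤ ⋯ ≤ N_K be natural-number thresholds. Define F̂(t) = |{j ∈ Fin n : d j ≥ t}|. If for every i ∈ {1, …, K} one has F̂(N_i + 1) ≤ ∑_{k=i+1}^{K} n_k, then there exists a permutation σ of Fin n such that, partitioning the positions 1, …, n in order into consecutive blocks of sizes n_1, …, n_K, every position in the k-th block satisfies d(σ(position)) ≤ N_k. -/
theorem matrix_template_fits {n K : ℕ} (hn : 0 < n) (hK : 0 < K)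
    (d : Fin n → ℕ) (nseq : Fin K → ℕ) (hsum : ∑ k, nseq k = n)
    (N : Fin K → ℕ) (hmono : Monotone N)
    (hfit : ∀ i : Fin K,
      (Finset.univ.filter (fun j : Fin n => N i + 1 ≤ d j)).card
        ≤ ∑ k ∈ Finset.univ.filter (fun k : Fin K => i < k), nseq k) :
    ∃ σ : Equiv.Perm (Fin n),
      ∀ (j : Fin n) (k : Fin K),
        (∑ k' ∈ Finset.univ.filter (fun k' : Fin K => k' < k), nseq k') ≤ (j : ℕ) →
        (j : ℕ) < ∑ k' ∈ Finset.univ.filter (fun k' : Fin K => k' ≤ k), nseq k' →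
        d (σ j) ≤ N k := by
  refine ⟨Tuple.sort d, ?_⟩
  intro j k _ hhi
  by_contra hcon
  push_neg at hcon
  set σ := Tuple.sort d with hσ
  have hmon : Monotone (d ∘ σ) := Tuple.monotone_sort d
  -- all positions ≥ j have large d
  have hsub : Finset.Ici j ⊆ Finset.univ.filter (fun j' => N k + 1 ≤ d (σ j')) := by
    intro j' hj'
    simp only [Finset.mem_filter, Finset.mem_univ, true_and]
    exact le_trans hcon (hmon (Finset.mem_Ici.mp hj'))
  have hcard1 : n - (j : ℕ) ≤ (Finset.univ.filter (fun j' => N k + 1 ≤ d (σ j'))).card := by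
    have := Finset.card_le_card hsub
    simpa [Fin.card_Ici] using this
  -- reindex by the permutation
  have hcard2 : (Finset.univ.filter (fun j' => N k + 1 ≤ d (σ j'))).card
      = (Finset.univ.filter (fun j' : Fin n => N k + 1 ≤ d j')).card := by
    apply Finset.card_bij (fun a _ => σ a)
    · intro a ha
      simp only [Finset.mem_filter, Finset.mem_univ, true_and] at ha ⊢
      exact ha
    · intro a _ b _ hab
      exact σ.injective hab
    · intro b hb
      refine ⟨σ.symm b, ?_, by simp⟩
      simp only [Finset.mem_filter, Finset.mem_univ, true_and, Equiv.apply_symm_apply] at hb ⊢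
      simpa using hb
  have hfitk := hfit k
  -- the two block sums add up to n
  have hpart : (∑ k' ∈ Finset.univ.filter (fun k' : Fin K => k' ≤ k), nseq k')
      + (∑ k' ∈ Finset.univ.filter (fun k' : Fin K => k < k'), nseq k') = n := by
    rw [← hsum]
    rw [← Finset.sum_filter_add_sum_filter_not Finset.univ (fun k' : Fin K => k' ≤ k) nseq]
    congr 1
    apply Finset.sum_congr _ (fun _ _ => rfl)
    ext k'
    simp [not_le]
  have hjn : (j : ℕ) < n := j.isLt
  omega
end
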